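/- Let m, N_L, N_R be positive integers, let w ∈ ℝ^{m×(N_L+N_R)} be a fixed weight matrix, let μ_1, …, μ_{N_L+N_R} ∈ ℝ^m be centers, let α_1, …, α_{N_L+N_R} ∈ (0,∞)^m be fixed strictly positive base steepness vectors, fix l ∈ {1, …, N_L}, and let y ∈ ℝ^m satisfy y_i ≠ μ_{ji} for every i = 1, …, m and every j = 1, …, N_L+N_R. For t > 0 define the vector field F^t: ℝ^m → ℝ^m by F^t_i(z) := Σ_{j=1}^{N_L} w_{ij} Λ(z; μ_j, tα_j) + Σ_{k=N_L+1}^{N_L+N_R} w_{ik} P(z; μ_k, tα_k), and for each j ≤ N_L define μ*_{lj,i} := max(μ_{li}, μ_{ji}) with α*_{lj,i} := α_{li} if μ_{li} ≥ μ_{ji} and α*_{lj,i} := α_{ji} otherwise. Then the Lie derivative of the conjunctive logistic function, ∇_y Λ(y; μ_l, tα_l) · F^t(y), minus the nonlinear combination Σ_{i=1}^m Σ_{j=1}^{N_L} tα_{li} w_{ij} (1 − λ(y_i; μ_{li}, tα_{li})) Λ(y; μ*_{lj}, tα*_{lj}) + Σ_{i=1}^m Σ_{k=N_L+1}^{N_L+N_R}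 tα_{li} w_{ik} (1 − λ(y_i; μ_{li}, tα_{li})) H(y; (μ_l, tα_l), (μ_k, tα_k)), converges to 0 exponentially as t → ∞: there exist constants C, c > 0 such that the absolute value of this difference is at most C·exp(−c·t) for all t ≥ 1. -/

import Mathlib

open MeasureTheory ProbabilityTheory Real

noncomputable def logisticFun (y μ α : ℝ) : ℝ := 1 / (1 + Real.exp (-α * (y - μ)))

noncomputable def rbfFun (y μ α : ℝ) : ℝ :=
  Real.exp (-α * (y - μ)) / (1 + Real.exp (-α * (y - μ))) ^ 2

noncomputable def conjLog {m : ℕ} (y μ α : Fin m → ℝ) : ℝ :=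
  ∏ i, logisticFun (y i) (μ i) (α i)

noncomputable def conjRBF {m : ℕ} (y μ α : Fin m → ℝ) : ℝ :=
  ∏ i, rbfFun (y i) (μ i) (α i)

open scoped Classical in
/-- Decision function `H(y; (μl, αl), (μk, αk))`. -/
noncomputable def decisionH {m : ℕ} (y μl αl μk αk : Fin m → ℝ) : ℝ :=
  if ∀ i, μl i < μk i then conjRBF y μk αk else 0

/-!
Since `∂λ/∂y = α (1 - λ) λ`, the Lie derivative equals `∑ᵢ tα_{li} (1 - λ_{li}) Λ_l F_i`, so the
difference in question is a combination, with coefficients `O(t)`, of the errors `Λ_l Λ_j - Λ*_{lj}`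
and `Λ_l P_k - H`. Let `b > 0` be a lower bound for all `α_{ji} |y_i - μ_{ji}|`. Off the centres
each logistic factor is `e^{-bt}`-close to `0` or `1` and each RBF factor is below `e^{-bt}`. Hence,
coordinatewise, `λ(μ_l) λ(μ_j)` is `e^{-bt}`-close to the logistic with the larger centre, so
`|Λ_l Λ_j - Λ*_{lj}| ≤ m e^{-bt}`; and `|Λ_l P_k - H| ≤ P_k ≤ e^{-bt}` in either branch of `H`.
The prefactor `t` is absorbed by `t e^{-bt} ≤ (2/b) e^{-bt/2}`.
-/

open Finset Filter

section Logistic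

variable (y μ α : ℝ)

lemma logisticFun_pos : 0 < logisticFun y μ α := by
  unfold logisticFun; positivity

lemma logisticFun_le_one : logisticFun y μ α ≤ 1 := by
  unfold logisticFun
  rw [div_le_one (by positivity)]
  linarith [exp_pos (-α * (y - μ))]

lemma abs_logisticFun_le_one : |logisticFun y μ α| ≤ 1 := by
  rw [abs_of_pos (logisticFun_pos y μ α)]
  exact logisticFun_le_one y μ α

lemma abs_one_sub_logisticFun_le_one : |1 - logisticFun y μ α| ≤ 1 :=
  abs_le.2 ⟨by linarith [logisticFun_le_one y μ α], by linarith [logisticFun_pos y μ α]⟩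

lemma one_sub_logisticFun :
    1 - logisticFun y μ α = exp (-α * (y - μ)) / (1 + exp (-α * (y - μ))) := by
  unfold logisticFun
  field_simp
  ring

lemma logisticFun_le_exp : logisticFun y μ α ≤ exp (α * (y - μ)) := by
  unfold logisticFun
  rw [div_le_iff₀ (by positivity), mul_add, mul_one, ← exp_add,
    show α * (y - μ) + -α * (y - μ) = 0 by ring, exp_zero]
  linarith [exp_pos (α * (y - μ))]

lemma one_sub_logisticFun_le_exp : 1 - logisticFun y μ α ≤ exp (-α * (y - μ)) := by
  rw [one_sub_logisticFun]
  exact div_le_self (exp_pos _).le (by linarith [exp_pos (-α * (y - μ))])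

lemma hasDerivAt_logisticFun :
    HasDerivAt (fun x => logisticFun x μ α)
      (α * (1 - logisticFun y μ α) * logisticFun y μ α) y := by
  have hden :
      HasDerivAt (fun x => 1 + exp (-α * (x - μ))) (exp (-α * (y - μ)) * -α) y := by
    simpa using (((hasDerivAt_id y).sub_const μ).const_mul (-α)).exp.const_add 1
  have hfun : (fun x => logisticFun x μ α) = fun x => (1 + exp (-α * (x - μ)))⁻¹ := by
    funext x
    simp [logisticFun]
  rw [hfun]
  refine (hden.inv (by positivity)).congr_deriv ?_
  rw [one_sub_logisticFun]
  unfold logisticFun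
  field_simp

end Logistic

/-- Left of `μ₁` the first factor is small; right of `μ₁ ≥ μ₂` the second one is. -/
lemma logisticFun_mul_one_sub_logisticFun_le {y μ₁ μ₂ : ℝ} (α₁ α₂ : ℝ) (hμ : μ₂ ≤ μ₁) :
    logisticFun y μ₁ α₁ * (1 - logisticFun y μ₂ α₂)
      ≤ max (exp (-(α₁ * |y - μ₁|))) (exp (-(α₂ * |y - μ₂|))) := by
  rcases le_total y μ₁ with hy | hy
  · calc _ ≤ logisticFun y μ₁ α₁ := mul_le_of_le_one_right (logisticFun_pos ..).le
            (by linarith [logisticFun_pos y μ₂ α₂])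
      _ ≤ exp (α₁ * (y - μ₁)) := logisticFun_le_exp ..
      _ = exp (-(α₁ * |y - μ₁|)) := by rw [abs_of_nonpos (by linarith)]; ring_nf
      _ ≤ _ := le_max_left _ _
  · calc _ ≤ 1 - logisticFun y μ₂ α₂ := mul_le_of_le_one_left
            (by linarith [logisticFun_le_one y μ₂ α₂]) (logisticFun_le_one ..)
      _ ≤ exp (-α₂ * (y - μ₂)) := one_sub_logisticFun_le_exp ..
      _ = exp (-(α₂ * |y - μ₂|)) := by rw [abs_of_nonneg (by linarith)]; ring_nf
      _ ≤ _ := le_max_right _ _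

lemma abs_logisticFun_mul_logisticFun_sub_le (y μ₁ μ₂ α₁ α₂ : ℝ) :
    |logisticFun y μ₁ α₁ * logisticFun y μ₂ α₂
        - logisticFun y (max μ₁ μ₂) (if μ₂ ≤ μ₁ then α₁ else α₂)|
      ≤ max (exp (-(α₁ * |y - μ₁|))) (exp (-(α₂ * |y - μ₂|))) := by
  have := logisticFun_pos y μ₁ α₁
  have := logisticFun_pos y μ₂ α₂
  have := logisticFun_le_one y μ₁ α₁
  have := logisticFun_le_one y μ₂ α₂
  split_ifs with h
  · rw [max_eq_left h, abs_sub_comm, abs_of_nonneg (by nlinarith)]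
    convert logisticFun_mul_one_sub_logisticFun_le α₁ α₂ h using 1
    ring
  · have h' := (not_le.1 h).le
    rw [max_eq_right h', abs_sub_comm, abs_of_nonneg (by nlinarith), max_comm]
    convert logisticFun_mul_one_sub_logisticFun_le α₂ α₁ h' using 1
    ring

section RBF

variable (y μ α : ℝ)

lemma rbfFun_nonneg : 0 ≤ rbfFun y μ α := by
  unfold rbfFun; positivity

lemma rbfFun_le_exp_neg_abs : rbfFun y μ α ≤ exp (-|α * (y - μ)|) := by
  have hpos := exp_pos (-α * (y - μ))
  have hden : 0 < (1 + exp (-α * (y - μ))) ^ 2 := by positivity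
  rcases abs_cases (α * (y - μ)) with ⟨habs, -⟩ | ⟨habs, -⟩
  · rw [habs, ← neg_mul]
    exact div_le_self hpos.le (by nlinarith)
  · rw [habs, neg_neg, rbfFun, div_le_iff₀ hden]
    have hinv : exp (α * (y - μ)) * exp (-α * (y - μ)) = 1 := by
      rw [← exp_add]; ring_nf; exact exp_zero
    nlinarith [exp_pos (α * (y - μ))]

lemma rbfFun_le_one : rbfFun y μ α ≤ 1 :=
  (rbfFun_le_exp_neg_abs y μ α).trans (exp_le_one_iff.2 (neg_nonpos.2 (abs_nonneg _)))

end RBF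

lemma abs_prod_sub_prod_le {ι : Type*} (s : Finset ι) {f g : ι → ℝ} (hf : ∀ i, |f i| ≤ 1)
    (hg : ∀ i, |g i| ≤ 1) :
    |∏ i ∈ s, f i - ∏ i ∈ s, g i| ≤ ∑ i ∈ s, |f i - g i| := by
  classical
  induction s using Finset.induction_on with
  | empty => simp
  | insert a s ha ih =>
    have hG : |∏ i ∈ s, g i| ≤ 1 := by
      rw [abs_prod]
      exact prod_le_one (fun i _ => abs_nonneg _) fun i _ => hg i
    rw [prod_insert ha, prod_insert ha, sum_insert ha]
    calc |f a * ∏ i ∈ s, f i - g a * ∏ i ∈ s, g i|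
        = |f a * (∏ i ∈ s, f i - ∏ i ∈ s, g i) + (f a - g a) * ∏ i ∈ s, g i| := by ring_nf
      _ ≤ |f a| * |∏ i ∈ s, f i - ∏ i ∈ s, g i| + |f a - g a| * |∏ i ∈ s, g i| := by
        rw [← abs_mul, ← abs_mul]
        exact abs_add_le _ _
      _ ≤ 1 * |∏ i ∈ s, f i - ∏ i ∈ s, g i| + |f a - g a| * 1 := by
        gcongr
        exact hf a
      _ ≤ |f a - g a| + ∑ i ∈ s, |f i - g i| := by linarith

section Conjunctive

variable {m : ℕ} (y : Fin m → ℝ)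

lemma conjLog_nonneg (μ α : Fin m → ℝ) : 0 ≤ conjLog y μ α :=
  prod_nonneg fun _ _ => (logisticFun_pos ..).le

lemma conjLog_le_one (μ α : Fin m → ℝ) : conjLog y μ α ≤ 1 :=
  prod_le_one (fun _ _ => (logisticFun_pos ..).le) fun _ _ => logisticFun_le_one ..

lemma conjRBF_nonneg (μ α : Fin m → ℝ) : 0 ≤ conjRBF y μ α :=
  prod_nonneg fun _ _ => rbfFun_nonneg ..

lemma conjRBF_le_rbfFun (μ α : Fin m → ℝ) (i : Fin m) :
    conjRBF y μ α ≤ rbfFun (y i) (μ i) (α i) := by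
  simpa [conjRBF] using prod_le_prod_of_subset_of_le_one (subset_univ {i})
    (fun j _ => rbfFun_nonneg (y j) (μ j) (α j)) fun j _ _ => rbfFun_le_one ..

lemma abs_conjLog_mul_conjLog_sub_le {s : ℝ} {μ ν α β : Fin m → ℝ}
    (hμ : ∀ i, s ≤ α i * |y i - μ i|) (hν : ∀ i, s ≤ β i * |y i - ν i|) :
    |conjLog y μ α * conjLog y ν β
        - conjLog y (fun i => max (μ i) (ν i)) (fun i => if ν i ≤ μ i then α i else β i)|
      ≤ m * exp (-s) := by
  unfold conjLog
  rw [← prod_mul_distrib]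
  calc _ ≤ ∑ i, max (exp (-(α i * |y i - μ i|))) (exp (-(β i * |y i - ν i|))) :=
        (abs_prod_sub_prod_le _
          (fun i => (abs_mul _ _).trans_le (mul_le_one₀ (abs_logisticFun_le_one ..)
            (abs_nonneg _) (abs_logisticFun_le_one ..)))
          fun i => abs_logisticFun_le_one ..).trans
        (sum_le_sum fun i _ => abs_logisticFun_mul_logisticFun_sub_le ..)
    _ ≤ ∑ _i : Fin m, exp (-s) := sum_le_sum fun i _ =>
        max_le (exp_le_exp.2 (neg_le_neg (hμ i))) (exp_le_exp.2 (neg_le_neg (hν i)))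
    _ = m * exp (-s) := by simp

lemma conjRBF_le_exp {s : ℝ} {μ α : Fin m → ℝ} (i : Fin m) (hα : 0 ≤ α i)
    (hs : s ≤ α i * |y i - μ i|) : conjRBF y μ α ≤ exp (-s) :=
  calc conjRBF y μ α ≤ exp (-|α i * (y i - μ i)|) :=
        (conjRBF_le_rbfFun y μ α i).trans (rbfFun_le_exp_neg_abs ..)
    _ ≤ exp (-s) := by rw [abs_mul, abs_of_nonneg hα]; exact exp_le_exp.2 (neg_le_neg hs)

lemma abs_conjLog_mul_conjRBF_sub_decisionH_le (μ α ν β : Fin m → ℝ) :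
    |conjLog y μ α * conjRBF y ν β - decisionH y μ α ν β| ≤ conjRBF y ν β := by
  have hΛ₀ := conjLog_nonneg y μ α
  have hΛ₁ := conjLog_le_one y μ α
  have hP := conjRBF_nonneg y ν β
  unfold decisionH
  split_ifs
  · rw [abs_of_nonpos (by nlinarith)]; nlinarith
  · rw [sub_zero, abs_of_nonneg (by positivity)]; nlinarith

lemma hasFDerivAt_conjLog (μ α : Fin m → ℝ) :
    HasFDerivAt (fun z : Fin m → ℝ => conjLog z μ α)
      (∑ i, (∏ j ∈ univ.erase i, logisticFun (y j) (μ j) (α j)) •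
        ((α i * (1 - logisticFun (y i) (μ i) (α i)) * logisticFun (y i) (μ i) (α i)) •
          (ContinuousLinearMap.proj i : (Fin m → ℝ) →L[ℝ] ℝ))) y :=
  HasFDerivAt.finsetProd fun i _ => by
    -- elaborating the composite on its own keeps `logisticFun` from being unfolded by unification
    have h := (hasDerivAt_logisticFun (y i) (μ i) (α i)).comp_hasFDerivAt y
      (ContinuousLinearMap.proj i : (Fin m → ℝ) →L[ℝ] ℝ).hasFDerivAt
    exact h

lemma fderiv_conjLog_apply (μ α v : Fin m → ℝ) :
    fderiv ℝ (fun z : Fin m → ℝ => conjLog z μ α) y v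
      = ∑ i, α i * (1 - logisticFun (y i) (μ i) (α i)) * conjLog y μ α * v i := by
  rw [(hasFDerivAt_conjLog y μ α).fderiv]
  simp only [FunLike.coe_sum, Finset.sum_apply, FunLike.coe_smul,
    Pi.smul_apply, ContinuousLinearMap.proj_apply, smul_eq_mul]
  refine sum_congr rfl fun i _ => ?_
  rw [conjLog, ← prod_erase_mul univ _ (mem_univ i)]
  ring

end Conjunctive

lemma abs_sum_mul_sum_sub_sum_sum_le {ι κ : Type*} [Fintype ι] [Fintype κ] (a b : ι → ℝ)
    (w : ι → κ → ℝ) {P ε : ℝ} {X X' : κ → ℝ} (hb : ∀ i, |b i| ≤ 1)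
    (hX : ∀ j, |P * X j - X' j| ≤ ε) :
    |∑ i, a i * b i * P * ∑ j, w i j * X j - ∑ i, ∑ j, a i * w i j * b i * X' j|
      ≤ (∑ i, ∑ j, |a i * w i j|) * ε := by
  have hsplit : ∑ i, a i * b i * P * ∑ j, w i j * X j - ∑ i, ∑ j, a i * w i j * b i * X' j
      = ∑ i, ∑ j, a i * w i j * (b i * (P * X j - X' j)) := by
    simp only [mul_sum, ← sum_sub_distrib]
    exact sum_congr rfl fun i _ => sum_congr rfl fun j _ => by ring
  rw [hsplit, sum_mul]
  refine (abs_sum_le_sum_abs _ _).trans (sum_le_sum fun i _ => ?_)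
  rw [sum_mul]
  refine (abs_sum_le_sum_abs _ _).trans (sum_le_sum fun j _ => ?_)
  rw [abs_mul, abs_mul (b i)]
  exact mul_le_mul_of_nonneg_left
    ((mul_le_mul (hb i) (hX j) (abs_nonneg _) zero_le_one).trans_eq (one_mul ε)) (abs_nonneg _)

lemma mul_exp_neg_le {b : ℝ} (hb : 0 < b) (t : ℝ) :
    t * exp (-(b * t)) ≤ 2 / b * exp (-(b / 2) * t) :=
  calc t * exp (-(b * t)) ≤ 2 / b * exp (b / 2 * t) * exp (-(b * t)) := by
        gcongr
        rw [div_mul_eq_mul_div, le_div_iff₀ hb]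
        linarith [add_one_le_exp (b / 2 * t)]
    _ = 2 / b * exp (-(b / 2) * t) := by rw [mul_assoc, ← exp_add]; ring_nf

theorem lie_deriv_conjLog_exp_approx_general
    (m NL NR : ℕ) (hm : 0 < m)
    (wL : Fin m → Fin NL → ℝ) (wR : Fin m → Fin NR → ℝ)
    (μL : Fin NL → Fin m → ℝ) (μR : Fin NR → Fin m → ℝ)
    (αL : Fin NL → Fin m → ℝ) (αR : Fin NR → Fin m → ℝ)
    (hαL : ∀ j i, 0 < αL j i) (hαR : ∀ k i, 0 < αR k i)
    (l : Fin NL) (y : Fin m → ℝ)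
    (hyL : ∀ i j, y i ≠ μL j i) (hyR : ∀ i k, y i ≠ μR k i) :
    ∃ C c : ℝ, 0 < C ∧ 0 < c ∧ ∀ t : ℝ, 1 ≤ t →
      |fderiv ℝ (fun z : Fin m → ℝ => conjLog z (μL l) (fun i => t * αL l i)) y
          (fun i => (∑ j, wL i j * conjLog y (μL j) (fun i' => t * αL j i'))
            + ∑ k, wR i k * conjRBF y (μR k) (fun i' => t * αR k i'))
        - ((∑ i, ∑ j, t * αL l i * wL i j
              * (1 - logisticFun (y i) (μL l i) (t * αL l i))
              * conjLog y (fun i' => max (μL l i') (μL j i'))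
                  (fun i' => t * (if μL j i' ≤ μL l i' then αL l i' else αL j i')))
          + ∑ i, ∑ k, t * αL l i * wR i k
              * (1 - logisticFun (y i) (μL l i) (t * αL l i))
              * decisionH y (μL l) (fun i' => t * αL l i') (μR k) (fun i' => t * αR k i'))|
      ≤ C * Real.exp (-c * t) := by
  obtain ⟨b, hb, hbL, hbR⟩ : ∃ b > 0, (∀ j i, b ≤ αL j i * |y i - μL j i|) ∧
      ∀ k i, b ≤ αR k i * |y i - μR k i| :=
    ((eventually_all.2 fun j => eventually_all.2 fun i => eventually_le_nhds
        (mul_pos (hαL j i) (abs_pos.2 (sub_ne_zero.2 (hyL i j))))).and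
      (eventually_all.2 fun k => eventually_all.2 fun i => eventually_le_nhds
        (mul_pos (hαR k i) (abs_pos.2 (sub_ne_zero.2 (hyR i k)))))).exists_gt
  set K := (∑ i, ∑ j, |αL l i * wL i j|) * m + ∑ i, ∑ k, |αL l i * wR i k|
  refine ⟨K * (2 / b) + 1, b / 2, by positivity, by positivity, fun t ht => ?_⟩
  have ht₀ : 0 ≤ t := zero_le_one.trans ht
  have scale : ∀ {α d : ℝ}, b ≤ α * d → b * t ≤ t * α * d := fun h => by nlinarith
  have i₀ : Fin m := ⟨0, hm⟩
  have hL := fun j => abs_conjLog_mul_conjLog_sub_le y (fun i => scale (hbL l i))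
    fun i => scale (hbL j i)
  have hR := fun k => (abs_conjLog_mul_conjRBF_sub_decisionH_le y (μL l) (fun i => t * αL l i)
    (μR k) (fun i => t * αR k i)).trans
      (conjRBF_le_exp y i₀ (mul_nonneg ht₀ (hαR k i₀).le) (scale (hbR k i₀)))
  simp only [fderiv_conjLog_apply, mul_add, sum_add_distrib, mul_ite]
  rw [add_sub_add_comm]
  have hsum : ∀ {κ : Type} [Fintype κ] (w : Fin m → κ → ℝ),
      ∑ i, ∑ j, |t * αL l i * w i j| = t * ∑ i, ∑ j, |αL l i * w i j| := fun w => by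
    simp only [mul_assoc t, abs_mul t, abs_of_nonneg ht₀, mul_sum]
  calc _ ≤ (∑ i, ∑ j, |t * αL l i * wL i j|) * (m * exp (-(b * t)))
        + (∑ i, ∑ k, |t * αL l i * wR i k|) * exp (-(b * t)) :=
      (abs_add_le _ _).trans (add_le_add
        (abs_sum_mul_sum_sub_sum_sum_le _ _ _ (fun _ => abs_one_sub_logisticFun_le_one ..) hL)
        (abs_sum_mul_sum_sub_sum_sum_le _ _ _ (fun _ => abs_one_sub_logisticFun_le_one ..) hR))
    _ = K * (t * exp (-(b * t))) := by rw [hsum, hsum]; ring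
    _ ≤ K * (2 / b * exp (-(b / 2) * t)) := by gcongr K * ?_; exact mul_exp_neg_le hb t
    _ ≤ (K * (2 / b) + 1) * exp (-(b / 2) * t) := by nlinarith [exp_pos (-(b / 2) * t)]

theorem lie_deriv_conjLog_exp_approx
    (m NL NR : ℕ) (hm : 0 < m) (hNL : 0 < NL) (hNR : 0 < NR)
    (wL : Fin m → Fin NL → ℝ) (wR : Fin m → Fin NR → ℝ)
    (μL : Fin NL → Fin m → ℝ) (μR : Fin NR → Fin m → ℝ)
    (αL : Fin NL → Fin m → ℝ) (αR : Fin NR → Fin m → ℝ)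
    (hαL : ∀ j i, 0 < αL j i) (hαR : ∀ k i, 0 < αR k i)
    (l : Fin NL) (y : Fin m → ℝ)
    (hyL : ∀ i j, y i ≠ μL j i) (hyR : ∀ i k, y i ≠ μR k i) :
    ∃ C c : ℝ, 0 < C ∧ 0 < c ∧ ∀ t : ℝ, 1 ≤ t →
      |fderiv ℝ (fun z : Fin m → ℝ => conjLog z (μL l) (fun i => t * αL l i)) y
          (fun i => (∑ j, wL i j * conjLog y (μL j) (fun i' => t * αL j i'))
            + ∑ k, wR i k * conjRBF y (μR k) (fun i' => t * αR k i'))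
        - ((∑ i, ∑ j, t * αL l i * wL i j
              * (1 - logisticFun (y i) (μL l i) (t * αL l i))
              * conjLog y (fun i' => max (μL l i') (μL j i'))
                  (fun i' => t * (if μL j i' ≤ μL l i' then αL l i' else αL j i')))
          + ∑ i, ∑ k, t * αL l i * wR i k
              * (1 - logisticFun (y i) (μL l i) (t * αL l i))
              * decisionH y (μL l) (fun i' => t * αL l i') (μR k) (fun i' => t * αR k i'))|
      ≤ C * Real.exp (-c * t) :=
  lie_deriv_conjLog_exp_approx_general m NL NR hm wL wR μL μR αL αR hαL hαR l y hyL hyR
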